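/- For 0 < T < T_c and k ∈ ℝ, the difference K_{T_c}(k) - K_T(k) satisfies 0 ≤ K_{T_c}(k) - K_T(k) ≤ C·(T_c - T) for a constant C depending only on T and T_c, uniformly in k. In particular, it admits the integral representation K_{T_c}(k) - K_T(k) = ∫₀¹ [I_T k² / (2 sinh²(k/(2T_c) + t I_T k / 2))] dt with I_T = 1/T - 1/T_c. -/

import Mathlib

/-!
Write `a = k/(2T_c)` and `b = k/(2T)`; for `k ≠ 0` they have the same sign, so `coth` is smooth
on `[a, b]` with derivative `-1/sinh²`, and `K_{T_c}(k) - K_T(k) = k (coth a - coth b)` becomes the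
integral after the affine substitution `x = a + t (b - a)`, where `b - a = I_T k / 2`.
The integrand is nonnegative, and `sinh² x ≥ x² ≥ k²/(4T_c²)` on the path bounds it by
`2 T_c² I_T = 2 (T_c / T) (T_c - T)`.
-/

/-- `K_T(k) = k/tanh(k/(2T))`, extended by `2T` at `k = 0`. -/
noncomputable def KT (T k : ℝ) : ℝ :=
  if k = 0 then 2 * T else k / Real.tanh (k / (2 * T))

open Set

namespace Real

lemma sq_le_sinh_sq (x : ℝ) : x ^ 2 ≤ sinh x ^ 2 :=
  sq_le_sq.2 <| by rw [abs_sinh]; exact self_le_sinh_iff.2 (abs_nonneg x)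

lemma hasDerivAt_cosh_div_sinh {x : ℝ} (hx : x ≠ 0) :
    HasDerivAt (fun y => cosh y / sinh y) (-(sinh x ^ 2)⁻¹) x := by
  refine ((hasDerivAt_cosh x).div (hasDerivAt_sinh x) (sinh_ne_zero.2 hx)).congr_deriv ?_
  have hs : sinh x ≠ 0 := sinh_ne_zero.2 hx
  field_simp
  linear_combination -cosh_sq_sub_sinh_sq x

lemma integral_inv_sinh_sq {a b : ℝ} (h : (0 : ℝ) ∉ uIcc a b) :
    ∫ x in a..b, (sinh x ^ 2)⁻¹ = cosh a / sinh a - cosh b / sinh b := by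
  have hne : ∀ x ∈ uIcc a b, x ≠ 0 := fun x hx h0 => h (h0 ▸ hx)
  have hint : IntervalIntegrable (fun x => (sinh x ^ 2)⁻¹) MeasureTheory.volume a b :=
    ((continuous_sinh.pow 2).continuousOn.inv₀
      fun x hx => pow_ne_zero 2 (sinh_ne_zero.2 (hne x hx))).intervalIntegrable
  have hFTC := intervalIntegral.integral_eq_sub_of_hasDerivAt
    (fun x hx => hasDerivAt_cosh_div_sinh (hne x hx)) hint.neg
  rw [intervalIntegral.integral_neg] at hFTC
  linarith

end Real

open Real

lemma KT_of_ne_zero {T k : ℝ} (hk : k ≠ 0) :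
    KT T k = k * (cosh (k / (2 * T)) / sinh (k / (2 * T))) := by
  rw [KT, if_neg hk, tanh_eq_sinh_div_cosh, div_div_eq_mul_div, mul_div_assoc]

lemma KT_sub_KT_eq_integral {T Tc k : ℝ} (hT : 0 < T) (hTTc : T < Tc) (hk : k ≠ 0) :
    KT Tc k - KT T k =
      ∫ t in (0:ℝ)..1,
        (1 / T - 1 / Tc) * k ^ 2 /
          (2 * sinh (k / (2 * Tc) + t * (1 / T - 1 / Tc) * k / 2) ^ 2) := by
  have hTc : 0 < Tc := hT.trans hTTc
  have hI : 0 < 1 / T - 1 / Tc := sub_pos.2 (one_div_lt_one_div_of_lt hT hTTc)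
  set d := (1 / T - 1 / Tc) * k / 2
  have hd : d ≠ 0 := by positivity
  have hend : d * 1 + k / (2 * Tc) = k / (2 * T) := by
    simp only [d]; field_simp; ring
  have hsign : (0 : ℝ) ∉ uIcc (k / (2 * Tc)) (k / (2 * T)) := by
    rcases hk.lt_or_gt with hk | hk
    · exact notMem_uIcc_of_gt (div_neg_of_neg_of_pos hk (by positivity))
        (div_neg_of_neg_of_pos hk (by positivity))
    · exact notMem_uIcc_of_lt (by positivity) (by positivity)
  calc KT Tc k - KT T k
      = k * ∫ x in k / (2 * Tc)..k / (2 * T), (sinh x ^ 2)⁻¹ := by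
        rw [integral_inv_sinh_sq hsign, KT_of_ne_zero hk, KT_of_ne_zero hk]; ring
    _ = k * d * ∫ t in (0:ℝ)..1, (sinh (d * t + k / (2 * Tc)) ^ 2)⁻¹ := by
        rw [intervalIntegral.integral_comp_mul_add (fun x => (sinh x ^ 2)⁻¹) hd, mul_zero,
          zero_add, hend, smul_eq_mul, mul_assoc, mul_inv_cancel_left₀ hd]
    _ = _ := by
        rw [← intervalIntegral.integral_const_mul]
        congr 1 with t
        rw [show d * t + k / (2 * Tc) = k / (2 * Tc) + t * (1 / T - 1 / Tc) * k / 2 by ring]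
        simp only [d]; field_simp

lemma KT_sub_integrand_le {T Tc k t : ℝ} (hT : 0 < T) (hTTc : T < Tc) (hk : k ≠ 0) (ht : 0 ≤ t) :
    (1 / T - 1 / Tc) * k ^ 2 / (2 * sinh (k / (2 * Tc) + t * (1 / T - 1 / Tc) * k / 2) ^ 2) ≤
      2 * Tc / T * (Tc - T) := by
  have hTc : 0 < Tc := hT.trans hTTc
  have hI : 0 < 1 / T - 1 / Tc := sub_pos.2 (one_div_lt_one_div_of_lt hT hTTc)
  set s := 1 / (2 * Tc) + t * (1 / T - 1 / Tc) / 2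
  have hs : 1 / (2 * Tc) ≤ s := le_add_of_nonneg_right (by positivity)
  have harg : k / (2 * Tc) + t * (1 / T - 1 / Tc) * k / 2 = k * s := by simp only [s]; ring
  have hks : k * s ≠ 0 := mul_ne_zero hk (by positivity)
  calc (1 / T - 1 / Tc) * k ^ 2 / (2 * sinh (k / (2 * Tc) + t * (1 / T - 1 / Tc) * k / 2) ^ 2)
      ≤ (1 / T - 1 / Tc) * k ^ 2 / (2 * (k * s) ^ 2) := by
        rw [harg]
        gcongr (1 / T - 1 / Tc) * k ^ 2 / (2 * ?_)
        exact sq_le_sinh_sq _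
    _ = (1 / T - 1 / Tc) / (2 * s ^ 2) := by field_simp
    _ ≤ (1 / T - 1 / Tc) / (2 * (1 / (2 * Tc)) ^ 2) := by gcongr
    _ = 2 * Tc / T * (Tc - T) := by field_simp

lemma KT_sub_KT_mem_Icc {T Tc : ℝ} (hT : 0 < T) (hTTc : T < Tc) (k : ℝ) :
    KT Tc k - KT T k ∈ Icc 0 (2 * Tc / T * (Tc - T)) := by
  have hTc : 0 < Tc := hT.trans hTTc
  have hI : 0 < 1 / T - 1 / Tc := sub_pos.2 (one_div_lt_one_div_of_lt hT hTTc)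
  rcases eq_or_ne k 0 with rfl | hk
  · have h2 : 2 ≤ 2 * Tc / T := by rw [le_div_iff₀ hT]; linarith
    simp only [KT, if_true, mem_Icc]
    constructor <;> nlinarith
  have hnonneg : ∀ t, 0 ≤ (1 / T - 1 / Tc) * k ^ 2 /
      (2 * sinh (k / (2 * Tc) + t * (1 / T - 1 / Tc) * k / 2) ^ 2) := fun t => by positivity
  rw [KT_sub_KT_eq_integral hT hTTc hk]
  refine ⟨intervalIntegral.integral_nonneg zero_le_one fun t _ => hnonneg t, ?_⟩
  calc _ ≤ ‖∫ t in (0:ℝ)..1, (1 / T - 1 / Tc) * k ^ 2 /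
          (2 * sinh (k / (2 * Tc) + t * (1 / T - 1 / Tc) * k / 2) ^ 2)‖ := le_abs_self _
    _ ≤ 2 * Tc / T * (Tc - T) * |1 - 0| := intervalIntegral.norm_integral_le_of_norm_le_const
        fun t ht => by
          rw [uIoc_of_le zero_le_one] at ht
          rw [Real.norm_of_nonneg (hnonneg t)]
          exact KT_sub_integrand_le hT hTTc hk ht.1.le
    _ = 2 * Tc / T * (Tc - T) := by norm_num

/-- For `0 < T < T_c`: `0 ≤ K_{T_c}(k) - K_T(k) ≤ C·(T_c - T)` for a constant `C`
depending only on `T` and `T_c`, uniformly in `k`; and for `k ≠ 0` the difference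
admits the integral representation
`∫₀¹ I_T k² / (2 sinh²(k/(2T_c) + t I_T k/2)) dt` with `I_T = 1/T - 1/T_c`. -/
theorem KT_difference_bounds (T Tc : ℝ) (hT : 0 < T) (hTTc : T < Tc) :
    (∃ C : ℝ, 0 < C ∧ ∀ k : ℝ,
        0 ≤ KT Tc k - KT T k ∧ KT Tc k - KT T k ≤ C * (Tc - T)) ∧
      ∀ k : ℝ, k ≠ 0 →
        KT Tc k - KT T k =
          ∫ t in (0:ℝ)..1,
            (1 / T - 1 / Tc) * k ^ 2 /
              (2 * Real.sinh (k / (2 * Tc) + t * (1 / T - 1 / Tc) * k / 2) ^ 2) := by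
  have hTc : 0 < Tc := hT.trans hTTc
  exact ⟨⟨2 * Tc / T, by positivity, KT_sub_KT_mem_Icc hT hTTc⟩,
    fun k hk => KT_sub_KT_eq_integral hT hTTc hk⟩
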